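/- arXiv:1504.08127 — 4 statements merged into one kernel-verified Lean document; each statement's English description precedes it below -/
import Mathlib

section
/- For the elliptic curve E₁ : y² = x³ + x² + x over ℚ (Cremona 48a4), the point A = (i, i) with i² = -1 lies on E₁ over ℚ(i), has order 8, its complex conjugate satisfies Ā = 3A, and 4A = (0,0). -/
/-!
Since `Δ = -48 ≠ 0`, every solution of `y² = x³ + x² + x` is a nonsingular point. The tangent
at `A = (i, i)` has slope `1 + i`, giving `2A = (-1, i)`; the chord through `2A` and `A` is
horizontal, giving `3A = (-i, -i) = Ā`; the tangent at `2A` has slope `-i`, giving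
`4A = (0, 0)`, which is `2`-torsion as its `y`-coordinate vanishes. Hence `A` has order `8`.
-/

open WeierstrassCurve Complex

/-- The elliptic curve `E₁ : y² = x³ + x² + x` (Cremona 48a4), base-changed to `ℂ`. -/
def E48a4 : Affine ℂ := { a₁ := 0, a₂ := 1, a₃ := 0, a₄ := 1, a₆ := 0 }

namespace WeierstrassCurve.Affine

variable {F : Type*} [Field F] [DecidableEq F] {W : Affine F} {x₁ x₂ x₃ y₁ y₂ y₃ ℓ : F}

lemma slope_eq_of_X_ne (hx : x₁ ≠ x₂) (hℓ : ℓ * (x₁ - x₂) = y₁ - y₂) :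
    W.slope x₁ x₂ y₁ y₂ = ℓ := by
  rw [slope_of_X_ne hx, div_eq_iff (sub_ne_zero.mpr hx), hℓ]

lemma slope_self_eq_of_Y_ne (hy : y₁ ≠ W.negY x₁ y₁)
    (hℓ : ℓ * (y₁ - W.negY x₁ y₁) = 3 * x₁ ^ 2 + 2 * W.a₂ * x₁ + W.a₄ - W.a₁ * y₁) :
    W.slope x₁ x₁ y₁ y₁ = ℓ := by
  rw [slope_of_Y_ne rfl hy, div_eq_iff (sub_ne_zero.mpr hy), hℓ]

lemma Point.some_add_some_eq {h₁ : W.Nonsingular x₁ y₁} {h₂ : W.Nonsingular x₂ y₂}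
    {h₃ : W.Nonsingular x₃ y₃} (hxy : ¬(x₁ = x₂ ∧ y₁ = W.negY x₂ y₂))
    (hℓ : W.slope x₁ x₂ y₁ y₂ = ℓ) (hx : W.addX x₁ x₂ ℓ = x₃) (hy : W.addY x₁ x₂ y₁ ℓ = y₃) :
    some _ _ h₁ + some _ _ h₂ = some _ _ h₃ := by
  subst hℓ hx hy
  exact Point.add_some hxy

end WeierstrassCurve.Affine

namespace Complex

lemma I_ne_neg_I : I ≠ -I := by simp [I_ne_zero, eq_neg_iff_add_eq_zero]

lemma neg_one_ne_I : -1 ≠ I := fun h => by simpa using congrArg im h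

end Complex

namespace E48a4

open Affine Point

lemma Δ_eq : E48a4.Δ = -48 := by
  norm_num [E48a4, WeierstrassCurve.Δ, WeierstrassCurve.b₂, WeierstrassCurve.b₄,
    WeierstrassCurve.b₆, WeierstrassCurve.b₈]

lemma nonsingular_of_sq_eq {x y : ℂ} (h : y ^ 2 = x ^ 3 + x ^ 2 + x) : E48a4.Nonsingular x y :=
  (equation_iff_nonsingular_of_Δ_ne_zero (by rw [Δ_eq]; norm_num)).mp <| by
    rw [equation_iff]
    simp only [E48a4]
    linear_combination h

lemma nonsingular_I_I : E48a4.Nonsingular I I :=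
  nonsingular_of_sq_eq (by linear_combination -I * I_sq)

lemma nonsingular_neg_I_neg_I : E48a4.Nonsingular (-I) (-I) :=
  nonsingular_of_sq_eq (by linear_combination I * I_sq)

lemma nonsingular_neg_one_I : E48a4.Nonsingular (-1) I :=
  nonsingular_of_sq_eq (by linear_combination I_sq)

lemma nonsingular_zero_zero : E48a4.Nonsingular 0 0 :=
  nonsingular_of_sq_eq (by ring)

lemma negY_eq (x y : ℂ) : E48a4.negY x y = -y := by simp [negY, E48a4]

lemma addX_eq (x₁ x₂ ℓ : ℂ) : E48a4.addX x₁ x₂ ℓ = ℓ ^ 2 - 1 - x₁ - x₂ := by simp [addX, E48a4]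

lemma addY_eq (x₁ x₂ y₁ ℓ : ℂ) :
    E48a4.addY x₁ x₂ y₁ ℓ = -(ℓ * (ℓ ^ 2 - 1 - x₁ - x₂ - x₁) + y₁) := by
  rw [addY, negAddY, negY_eq, addX_eq]

lemma some_I_I_add_self :
    some _ _ nonsingular_I_I + some _ _ nonsingular_I_I = some _ _ nonsingular_neg_one_I :=
  some_add_some_eq (by rw [negY_eq]; exact fun h => I_ne_neg_I h.2)
    (slope_self_eq_of_Y_ne (ℓ := 1 + I) (by rw [negY_eq]; exact I_ne_neg_I)
      (by rw [negY_eq]; simp only [E48a4]; linear_combination -I_sq))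
    (by rw [addX_eq]; linear_combination I_sq) (by rw [addY_eq]; linear_combination -I * I_sq)

lemma some_neg_one_I_add_some_I_I :
    some _ _ nonsingular_neg_one_I + some _ _ nonsingular_I_I = some _ _ nonsingular_neg_I_neg_I :=
  some_add_some_eq (fun h => neg_one_ne_I h.1) (slope_eq_of_X_ne (ℓ := 0) neg_one_ne_I (by ring))
    (by rw [addX_eq]; ring) (by rw [addY_eq]; ring)

lemma some_neg_one_I_add_self :
    some _ _ nonsingular_neg_one_I + some _ _ nonsingular_neg_one_I =
      some _ _ nonsingular_zero_zero :=
  some_add_some_eq (by rw [negY_eq]; exact fun h => I_ne_neg_I h.2)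
    (slope_self_eq_of_Y_ne (ℓ := -I) (by rw [negY_eq]; exact I_ne_neg_I)
      (by rw [negY_eq]; simp only [E48a4]; linear_combination -2 * I_sq))
    (by rw [addX_eq]; linear_combination I_sq) (by rw [addY_eq]; linear_combination I * I_sq)

lemma some_zero_zero_add_self :
    some _ _ nonsingular_zero_zero + some _ _ nonsingular_zero_zero = 0 :=
  add_self_of_Y_eq (by rw [negY_eq, _root_.neg_zero])

end E48a4

/-- On `E₁ : y² = x³ + x² + x`, the point `A = (i, i)` lies on the curve, has order `8`,
its complex conjugate `Ā = (-i, -i)` satisfies `Ā = 3 A`, and `4 A = (0, 0)`. -/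
theorem E48a4_point_I :
    ∃ (hA : E48a4.Nonsingular I I) (hA' : E48a4.Nonsingular (-I) (-I))
      (hT : E48a4.Nonsingular 0 0),
      addOrderOf (Affine.Point.some _ _ hA) = 8 ∧
      Affine.Point.some _ _ hA' = (3 : ℤ) • Affine.Point.some _ _ hA ∧
      (4 : ℤ) • Affine.Point.some _ _ hA = Affine.Point.some _ _ hT := by
  refine ⟨E48a4.nonsingular_I_I, E48a4.nonsingular_neg_I_neg_I, E48a4.nonsingular_zero_zero,
    ?_, ?_, ?_⟩
  · have h4 : 2 ^ 2 • Affine.Point.some _ _ E48a4.nonsingular_I_I =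
        .some _ _ E48a4.nonsingular_zero_zero := by
      rw [pow_two, mul_nsmul, two_nsmul, two_nsmul, E48a4.some_I_I_add_self,
        E48a4.some_neg_one_I_add_self]
    have h8 : 2 ^ (2 + 1) • Affine.Point.some _ _ E48a4.nonsingular_I_I = 0 := by
      rw [pow_succ, mul_nsmul, h4, two_nsmul, E48a4.some_zero_zero_add_self]
    exact addOrderOf_eq_prime_pow (h4 ▸ Affine.Point.some_ne_zero _) h8
  · rw [show (3 : ℤ) = 2 + 1 from rfl, add_zsmul, two_zsmul, one_zsmul, E48a4.some_I_I_add_self,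
      E48a4.some_neg_one_I_add_some_I_I]
  · rw [show (4 : ℤ) = 2 + 2 from rfl, add_zsmul, two_zsmul, E48a4.some_I_I_add_self,
      E48a4.some_neg_one_I_add_self]
end

section
/- The change of variables X = 4x(x+y+k), Y = 8x²(x+y+k) transforms the curve x + 1/x + y + 1/y + k = 0 into the Weierstrass form Y² + 2kXY + 8kY = X³ + 4X², and the point Q = (0, 0) on this Weierstrass curve has order 4 (for k ∉ {0, ±4}). -/
/-!
Clearing denominators turns `x + 1/x + y + 1/y + k = 0` into `x²y + xy² + x + y + kxy = 0`, and
the Weierstrass equation evaluated at `X = 4x(x+y+k)`, `Y = 8x²(x+y+k)` is `-64x²(x+y+k)` times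
that polynomial.

On any Weierstrass curve `Y² + a₁XY + a₃Y = X³ + a₂X²` the tangent at `Q = (0, 0)` is horizontal,
so `2Q = (-a₂, a₁a₂ - a₃)`; when `a₁a₂ = a₃` (for `C_k`: `2k · 4 = 8k`) the tangent at `2Q` is
vertical, so `2Q ≠ 0` is `2`-torsion and `Q` has order `4`.
-/

open WeierstrassCurve

/-- The Weierstrass curve `C_k : Y² + 2kXY + 8kY = X³ + 4X²`. -/
def Ck (k : ℚ) : Affine ℚ := { a₁ := 2 * k, a₂ := 4, a₃ := 8 * k, a₄ := 0, a₆ := 0 }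

lemma weierstrass_eq_of_add_inv_add_add_inv_add_eq_zero {F : Type*} [Field F] {x y k : F}
    (hx : x ≠ 0) (hy : y ≠ 0) (h : x + 1 / x + y + 1 / y + k = 0) :
    (8 * x ^ 2 * (x + y + k)) ^ 2 + 2 * k * (4 * x * (x + y + k)) * (8 * x ^ 2 * (x + y + k)) +
        8 * k * (8 * x ^ 2 * (x + y + k)) =
      (4 * x * (x + y + k)) ^ 3 + 4 * (4 * x * (x + y + k)) ^ 2 := by
  have hcleared : x ^ 2 * y + x * y ^ 2 + x + y + k * x * y = 0 := by
    field_simp at h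
    linear_combination h
  linear_combination -64 * x ^ 2 * (x + y + k) * hcleared

namespace WeierstrassCurve.Affine

variable {F : Type*} [Field F] {W : Affine F}

lemma zero_ne_negY_zero_zero (h : W.Nonsingular 0 0) (ha₄ : W.a₄ = 0) :
    (0 : F) ≠ W.negY 0 0 := by
  have ha₃ : W.a₃ ≠ 0 := (nonsingular_zero.mp h).2.resolve_right (not_not.mpr ha₄)
  simpa [negY, eq_comm] using ha₃

variable [DecidableEq F]

lemma slope_zero_zero_zero_zero (h : W.Nonsingular 0 0) (ha₄ : W.a₄ = 0) :
    W.slope 0 0 0 0 = 0 := by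
  rw [slope_of_Y_ne rfl (zero_ne_negY_zero_zero h ha₄)]
  simp [ha₄]

theorem addOrderOf_some_zero_zero (h : W.Nonsingular 0 0) (ha₄ : W.a₄ = 0)
    (ha₁₂₃ : W.a₁ * W.a₂ = W.a₃) : addOrderOf (Point.some 0 0 h) = 4 := by
  have hℓ := slope_zero_zero_zero_zero h ha₄
  have hY := zero_ne_negY_zero_zero h ha₄
  obtain ⟨h₂, hQ₂⟩ : ∃ h₂ : W.Nonsingular (W.addX 0 0 (W.slope 0 0 0 0))
      (W.addY 0 0 0 (W.slope 0 0 0 0)), 2 • Point.some 0 0 h = Point.some _ _ h₂ :=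
    ⟨_, (two_nsmul _).trans (Point.add_self_of_Y_ne hY)⟩
  have hQ₂_two_torsion : 2 • Point.some _ _ h₂ = 0 := by
    refine (two_nsmul _).trans (Point.add_self_of_Y_eq ?_)
    simp only [hℓ, addY, negAddY, addX, negY]
    linear_combination ha₁₂₃
  refine addOrderOf_eq_prime_pow (p := 2) (n := 1) ?_ ?_
  · rw [pow_one, hQ₂]
    exact Point.some_ne_zero h₂
  · rw [pow_two, mul_nsmul, hQ₂, hQ₂_two_torsion]

end WeierstrassCurve.Affine

lemma Ck_nonsingular_zero_zero {k : ℚ} (hk : k ≠ 0) : (Ck k).Nonsingular 0 0 :=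
  Affine.nonsingular_zero.mpr ⟨rfl, Or.inl (mul_ne_zero (by norm_num) hk)⟩

theorem change_of_variables_and_order_four_general (k : ℚ) (hk0 : k ≠ 0) :
    (∀ x y : ℂ, x ≠ 0 → y ≠ 0 → x + 1 / x + y + 1 / y + (k : ℂ) = 0 →
      (8 * x ^ 2 * (x + y + k)) ^ 2 +
          2 * k * (4 * x * (x + y + k)) * (8 * x ^ 2 * (x + y + k)) +
          8 * k * (8 * x ^ 2 * (x + y + k)) =
        (4 * x * (x + y + k)) ^ 3 + 4 * (4 * x * (x + y + k)) ^ 2) ∧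
    ∃ hQ : (Ck k).Nonsingular 0 0, addOrderOf (Affine.Point.some _ _ hQ) = 4 :=
  ⟨fun _ _ hx hy h ↦ weierstrass_eq_of_add_inv_add_add_inv_add_eq_zero hx hy h,
    Ck_nonsingular_zero_zero hk0,
    Affine.addOrderOf_some_zero_zero _ rfl (by simp only [Ck]; ring)⟩

/-- For `k ∉ {0, 4, -4}`: (1) the change of variables `X = 4x(x+y+k)`, `Y = 8x²(x+y+k)`
maps solutions of `x + 1/x + y + 1/y + k = 0` with `x, y ≠ 0` to the Weierstrass curve
`Y² + 2kXY + 8kY = X³ + 4X²`; (2) the point `Q = (0, 0)` on this curve has order exactly `4`. -/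
theorem change_of_variables_and_order_four (k : ℚ) (hk0 : k ≠ 0) (hk4 : k ≠ 4)
    (hk4' : k ≠ -4) :
    (∀ x y : ℂ, x ≠ 0 → y ≠ 0 → x + 1 / x + y + 1 / y + (k : ℂ) = 0 →
      (8 * x ^ 2 * (x + y + k)) ^ 2 +
          2 * k * (4 * x * (x + y + k)) * (8 * x ^ 2 * (x + y + k)) +
          8 * k * (8 * x ^ 2 * (x + y + k)) =
        (4 * x * (x + y + k)) ^ 3 + 4 * (4 * x * (x + y + k)) ^ 2) ∧
    ∃ hQ : (Ck k).Nonsingular 0 0, addOrderOf (Affine.Point.some _ _ hQ) = 4 :=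
  change_of_variables_and_order_four_general k hk0
end

section
/- The change of variables X = x(x+y+3)+1, Y = x(x+1)(x+y+3)+1 transforms the curve x + 1/x + y + 1/y + 3 = 0 into the Weierstrass form Y² + XY = X³ + X. -/
/-!
Multiplying the curve equation by `x y` gives the polynomial relation `x y (x + y + 3) + x + y = 0`,
and `Y² + X Y - X³ - X` is `-x² (x + y + 3)` times that polynomial.
-/

theorem weierstrass_eq_of_mul_add_add_eq_zero {R : Type*} [CommRing R] {x y : R}
    (h : x * y * (x + y + 3) + x + y = 0) :
    (x * (x + 1) * (x + y + 3) + 1) ^ 2 +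
        (x * (x + y + 3) + 1) * (x * (x + 1) * (x + y + 3) + 1) =
      (x * (x + y + 3) + 1) ^ 3 + (x * (x + y + 3) + 1) := by
  linear_combination (-x ^ 2 * (x + y + 3)) * h

theorem mul_add_add_eq_zero_of_add_inv_add_add_inv_eq_zero {K : Type*} [Field K] {x y : K}
    (hx : x ≠ 0) (hy : y ≠ 0) (h : x + 1 / x + y + 1 / y + 3 = 0) :
    x * y * (x + y + 3) + x + y = 0 := by
  field_simp at h
  linear_combination h

/-- If `(x, y) ∈ (ℂˣ)²` satisfies `x + 1/x + y + 1/y + 3 = 0`, then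
`X = x(x+y+3) + 1` and `Y = x(x+1)(x+y+3) + 1` satisfy `Y² + XY = X³ + X`. -/
theorem change_of_variables_21 (x y : ℂ) (hx : x ≠ 0) (hy : y ≠ 0)
    (h : x + 1 / x + y + 1 / y + 3 = 0) :
    (x * (x + 1) * (x + y + 3) + 1) ^ 2 +
        (x * (x + y + 3) + 1) * (x * (x + 1) * (x + y + 3) + 1) =
      (x * (x + y + 3) + 1) ^ 3 + (x * (x + y + 3) + 1) :=
  weierstrass_eq_of_mul_add_add_eq_zero <|
    mul_add_add_eq_zero_of_add_inv_add_add_inv_eq_zero hx hy h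
end

section
/- Let L(E_{2,d}, s) = (1 - d^{1-s})ζ(s)ζ(s-1) for an integer d ≥ 2. Then for F = -4L₀ + (72/(7·21^s))(7·21^s - 21·7^s - 7·3^s + 21)ζ(s)ζ(s-1) (as a function of s), the Eisenstein contribution G(s) = (72/(7·21^s))(7·21^s - 21·7^s - 7·3^s + 21)ζ(s)ζ(s-1) satisfies G(0) = 0 and G'(0) = -6 log 7. -/
open Complex

/-- The Eisenstein contribution
`G(s) = (72/7) · 21^{-s} · (7·21^s - 21·7^s - 7·3^s + 21) · ζ(s) · ζ(s-1)`. -/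
noncomputable def eisContrib (s : ℂ) : ℂ :=
  72 / 7 * (21 : ℂ) ^ (-s) * (7 * (21 : ℂ) ^ s - 21 * (7 : ℂ) ^ s - 7 * (3 : ℂ) ^ s + 21) *
    riemannZeta s * riemannZeta (s - 1)

/-!
Write `G = (72/7) · P · Z` with `P(s) = 21^{-s}(7·21^s - 21·7^s - 7·3^s + 21)` and
`Z(s) = ζ(s)ζ(s-1)`, which is holomorphic away from `s = 1, 2`. Since `P(0) = 0`, the product rule
collapses at `0` to `G'(0) = (72/7) · P'(0) · Z(0)`, where `Z(0) = (-1/2)(-1/12) = 1/24` and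
`P'(0) = 7 log 21 - 21 log 7 - 7 log 3 = -14 log 7`.
-/

theorem HasDerivAt.mul_of_eq_zero_left {𝕜 𝔸 : Type*} [NontriviallyNormedField 𝕜] [NormedRing 𝔸]
    [NormedAlgebra 𝕜 𝔸] {f g : 𝕜 → 𝔸} {f' g' : 𝔸} {x : 𝕜} (hf : HasDerivAt f f' x)
    (hg : HasDerivAt g g' x) (hfx : f x = 0) :
    HasDerivAt (fun y => f y * g y) (f' * g x) x := by
  simpa [hfx] using hf.fun_mul hg

theorem analyticAt_riemannZeta {s : ℂ} (hs : s ≠ 1) : AnalyticAt ℂ riemannZeta s :=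
  analyticAt_iff_eventually_differentiableAt.mpr <|
    (isOpen_ne.eventually_mem hs).mono fun _ => differentiableAt_riemannZeta

theorem analyticAt_riemannZeta_mul_riemannZeta_sub_one {s : ℂ} (hs₁ : s ≠ 1) (hs₂ : s ≠ 2) :
    AnalyticAt ℂ (fun s => riemannZeta s * riemannZeta (s - 1)) s := by
  have hshift : AnalyticAt ℂ (fun s : ℂ => riemannZeta (s - 1)) s :=
    (analyticAt_riemannZeta (s := s - 1) (by grind)).comp (f := fun s => s - 1) (by fun_prop)
  exact (analyticAt_riemannZeta hs₁).mul hshift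

theorem riemannZeta_neg_one : riemannZeta (-1) = -1 / 12 := by
  have h := riemannZeta_neg_nat_eq_bernoulli 1
  norm_num [bernoulli] at h
  rw [h, neg_div]

noncomputable def eisFactor (s : ℂ) : ℂ :=
  (21 : ℂ) ^ (-s) * (7 * (21 : ℂ) ^ s - 21 * (7 : ℂ) ^ s - 7 * (3 : ℂ) ^ s + 21)

theorem eisContrib_eq_mul :
    eisContrib = fun s => 72 / 7 * eisFactor s * (riemannZeta s * riemannZeta (s - 1)) := by
  funext s
  simp only [eisContrib, eisFactor]
  ring

theorem eisFactor_zero : eisFactor 0 = 0 := by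
  norm_num [eisFactor]

theorem analyticAt_eisFactor (s : ℂ) : AnalyticAt ℂ eisFactor s := by
  unfold eisFactor
  fun_prop (disch := simp)

theorem hasDerivAt_eisFactor_zero : HasDerivAt eisFactor (-14 * Real.log 7) 0 := by
  have hpow (c : ℂ) (hc : c ≠ 0) : HasDerivAt (fun s : ℂ => c ^ s) (log c) 0 := by
    simpa using (hasDerivAt_id 0).const_cpow (.inl hc)
  have hpow_neg : HasDerivAt (fun s : ℂ => (21 : ℂ) ^ (-s)) (-log 21) 0 := by
    simpa using (hasDerivAt_neg 0).const_cpow (c := 21) (.inl (by norm_num))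
  have hP := hpow_neg.fun_mul (((((hpow 21 (by norm_num)).const_mul 7).fun_sub
    ((hpow 7 (by norm_num)).const_mul 21)).fun_sub ((hpow 3 (by norm_num)).const_mul 7)).add_const 21)
  have hlog : log (21 : ℂ) = log 3 + log 7 := by
    have hlog_real : Real.log 21 = Real.log 3 + Real.log 7 := by
      rw [← Real.log_mul (by norm_num) (by norm_num)]
      norm_num
    simpa using congrArg ((↑) : ℝ → ℂ) hlog_real
  refine hP.congr_deriv ?_
  norm_num [hlog]
  ring

/-- `G` is holomorphic at `s = 0`, with `G(0) = 0` and `G'(0) = -6 log 7`. -/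
theorem eisContrib_at_zero :
    AnalyticAt ℂ eisContrib 0 ∧ eisContrib 0 = 0 ∧
      deriv eisContrib 0 = -6 * Real.log 7 := by
  have hZ := analyticAt_riemannZeta_mul_riemannZeta_sub_one (s := 0) (by norm_num) (by norm_num)
  have hG := (hasDerivAt_eisFactor_zero.const_mul (72 / 7 : ℂ)).mul_of_eq_zero_left
    hZ.differentiableAt.hasDerivAt (by simp [eisFactor_zero])
  rw [eisContrib_eq_mul]
  refine ⟨(analyticAt_const.mul (analyticAt_eisFactor 0)).mul hZ, by simp [eisFactor_zero], ?_⟩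
  rw [hG.deriv, riemannZeta_zero, zero_sub, riemannZeta_neg_one]
  ring
end
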